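/- Let P be a metric space, X and Y real Banach spaces, C ⊆ Y a closed convex cone, F : P × X ⇒ Y a set-valued mapping with nonempty values, and R : P ⇒ X a set-valued mapping with nonempty values. Define ν₁(p,x) = exc(F(p,x), C) + dist(x, R(p)). Let p̄ ∈ P and x̄ ∈ X be such that ν₁(p̄,x̄) = 0 (i.e. x̄ ∈ R(p̄) and F(p̄,x̄) ⊆ C, using closedness). If F(·,x̄) : P ⇒ Y is Lipschitz upper semicontinuous at p̄ and R is Lipschitz lower semicontinuous at (p̄,x̄), then the function p ↦ ν₁(p,x̄) is calm from above at p̄, with calmness-from-above modulus at most Lipusc F(·,x̄)(p̄) + Liplsc R(p̄,x̄). -/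

import Mathlib

open Set Metric Filter Topology Pointwise
open scoped ENNReal NNReal

noncomputable section

/-- The excess of `A` over `B`: `exc A B = sup_{a ∈ A} dist (a, B)`,
computed in `ℝ≥0∞` so that the convention `dist (y, ∅) = +∞` holds. -/
def exc {Y : Type*} [PseudoEMetricSpace Y] (A B : Set Y) : ℝ≥0∞ :=
  ⨆ a ∈ A, EMetric.infEdist a B

/-- `Φ` is Lipschitz upper semicontinuous at `pb` with constant `ℓ` on `B(pb, δ)`. -/
def LipUscWith {P Y : Type*} [MetricSpace P] [PseudoEMetricSpace Y]
    (Φ : P → Set Y) (pb : P) (ℓ δ : ℝ) : Prop :=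
  ∀ p ∈ Metric.closedBall pb δ, exc (Φ p) (Φ pb) ≤ ENNReal.ofReal (ℓ * dist p pb)

/-- `Φ` is Lipschitz upper semicontinuous at `pb`. -/
def LipUscAt {P Y : Type*} [MetricSpace P] [PseudoEMetricSpace Y]
    (Φ : P → Set Y) (pb : P) : Prop :=
  ∃ ℓ > (0 : ℝ), ∃ δ > (0 : ℝ), LipUscWith Φ pb ℓ δ

/-- The modulus of Lipschitz upper semicontinuity of `Φ` at `pb`. -/
def lipuscMod {P Y : Type*} [MetricSpace P] [PseudoEMetricSpace Y]
    (Φ : P → Set Y) (pb : P) : ℝ :=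
  sInf {ℓ : ℝ | 0 < ℓ ∧ ∃ δ > (0 : ℝ), LipUscWith Φ pb ℓ δ}

/-- `Φ` is Lipschitz lower semicontinuous at `(pb, xb)` with constant `ℓ` on `B(pb, δ)`. -/
def LipLscWith {P X : Type*} [MetricSpace P] [MetricSpace X]
    (Φ : P → Set X) (pb : P) (xb : X) (ℓ δ : ℝ) : Prop :=
  ∀ p ∈ Metric.closedBall pb δ, (Φ p ∩ Metric.closedBall xb (ℓ * dist p pb)).Nonempty

/-- `Φ` is Lipschitz lower semicontinuous at `(pb, xb)`. -/
def LipLscAt {P X : Type*} [MetricSpace P] [MetricSpace X]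
    (Φ : P → Set X) (pb : P) (xb : X) : Prop :=
  ∃ ℓ > (0 : ℝ), ∃ δ > (0 : ℝ), LipLscWith Φ pb xb ℓ δ

/-- The modulus of Lipschitz lower semicontinuity of `Φ` at `(pb, xb)`. -/
def liplscMod {P X : Type*} [MetricSpace P] [MetricSpace X]
    (Φ : P → Set X) (pb : P) (xb : X) : ℝ :=
  sInf {ℓ : ℝ | 0 < ℓ ∧ ∃ δ > (0 : ℝ), LipLscWith Φ pb xb ℓ δ}

/-- `φ` is calm from above at `pb` with constant `ℓ` on `B(pb, δ)`. -/
def CalmFromAboveWith {P : Type*} [MetricSpace P] (φ : P → ℝ≥0∞) (pb : P) (ℓ δ : ℝ) : Prop :=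
  ∀ p ∈ Metric.closedBall pb δ, φ p ≤ φ pb + ENNReal.ofReal (ℓ * dist p pb)

/-- The modulus of calmness from above of `φ` at `pb`. -/
def calmFromAboveMod {P : Type*} [MetricSpace P] (φ : P → ℝ≥0∞) (pb : P) : ℝ :=
  sInf {ℓ : ℝ | 0 < ℓ ∧ ∃ δ > (0 : ℝ), CalmFromAboveWith φ pb ℓ δ}

/-! By the triangle inequality for the excess, `exc (F p x̄) C ≤ exc (F p x̄) (F p̄ x̄) + exc (F p̄ x̄) C`,
and a point of `R p` within `b · d(p, p̄)` of `x̄` bounds `dist (x̄, R p)`. Hence every Lipschitz u.s.c.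
constant `a` and Lipschitz l.s.c. constant `b` yield the calmness constant `a + b`, and passing to
infima bounds the modulus. -/

section Excess

variable {Y : Type*} [PseudoEMetricSpace Y]

theorem infEDist_le_exc {a : Y} {A : Set Y} (ha : a ∈ A) (B : Set Y) :
    infEDist a B ≤ exc A B :=
  le_iSup₂ (f := fun a _ => infEDist a B) a ha

theorem infEDist_le_infEDist_add_exc (y : Y) (A B : Set Y) :
    infEDist y B ≤ infEDist y A + exc A B := by
  rw [show infEDist y A = ⨅ a ∈ A, edist y a from rfl]
  simp only [ENNReal.iInf_add]
  refine le_iInf₂ fun a ha => ?_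
  calc infEDist y B ≤ edist y a + infEDist a B := infEDist_le_edist_add_infEDist
    _ ≤ edist y a + exc A B := by gcongr; exact infEDist_le_exc ha B

theorem exc_le_exc_add_exc (A B C : Set Y) : exc A C ≤ exc A B + exc B C :=
  iSup₂_le fun a ha => (infEDist_le_infEDist_add_exc a B C).trans <| by
    gcongr; exact infEDist_le_exc ha B

end Excess

section Calmness

variable {P : Type*} [MetricSpace P] {pb : P} {ℓ δ : ℝ}

theorem LipUscWith.calmFromAboveWith_exc {Y : Type*} [PseudoEMetricSpace Y] {Φ : P → Set Y}
    (h : LipUscWith Φ pb ℓ δ) (C : Set Y) :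
    CalmFromAboveWith (fun p => exc (Φ p) C) pb ℓ δ := fun p hp =>
  calc exc (Φ p) C ≤ exc (Φ p) (Φ pb) + exc (Φ pb) C := exc_le_exc_add_exc _ _ _
    _ ≤ exc (Φ pb) C + ENNReal.ofReal (ℓ * dist p pb) := by rw [add_comm]; gcongr; exact h p hp

theorem LipLscWith.calmFromAboveWith_infEDist {X : Type*} [MetricSpace X] {Φ : P → Set X}
    {xb : X} (h : LipLscWith Φ pb xb ℓ δ) :
    CalmFromAboveWith (fun p => infEDist xb (Φ p)) pb ℓ δ := fun p hp => by
  obtain ⟨x, hxΦ, hx⟩ := h p hp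
  calc infEDist xb (Φ p) ≤ edist xb x := infEDist_le_edist_of_mem hxΦ
    _ ≤ ENNReal.ofReal (ℓ * dist p pb) := by
      rw [edist_dist, dist_comm]; exact ENNReal.ofReal_le_ofReal (mem_closedBall.1 hx)
    _ ≤ _ := le_add_self

theorem CalmFromAboveWith.add {φ ψ : P → ℝ≥0∞} {a b δ₁ δ₂ : ℝ}
    (hφ : CalmFromAboveWith φ pb a δ₁) (hψ : CalmFromAboveWith ψ pb b δ₂) (ha : 0 ≤ a)
    (hb : 0 ≤ b) : CalmFromAboveWith (fun p => φ p + ψ p) pb (a + b) (min δ₁ δ₂) := by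
  intro p hp
  have hd := dist_nonneg (x := p) (y := pb)
  calc φ p + ψ p
      ≤ φ pb + ENNReal.ofReal (a * dist p pb) + (ψ pb + ENNReal.ofReal (b * dist p pb)) :=
        add_le_add (hφ p (closedBall_subset_closedBall (min_le_left _ _) hp))
          (hψ p (closedBall_subset_closedBall (min_le_right _ _) hp))
    _ = φ pb + ψ pb + ENNReal.ofReal ((a + b) * dist p pb) := by
        rw [add_mul, ENNReal.ofReal_add (by positivity) (by positivity)]; ring

end Calmness

theorem nu1_calm_from_above_general {P X Y : Type*} [MetricSpace P]
    [NormedAddCommGroup X]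
    [NormedAddCommGroup Y]
    (C : Set Y)
    (F : P → X → Set Y) (R : P → Set X)
    (pb : P) (xb : X)
    (hFusc : LipUscAt (fun p => F p xb) pb)
    (hRlsc : LipLscAt R pb xb) :
    (∃ ℓ > (0 : ℝ), ∃ δ > (0 : ℝ),
      CalmFromAboveWith (fun p => exc (F p xb) C + EMetric.infEdist xb (R p)) pb ℓ δ) ∧
    calmFromAboveMod (fun p => exc (F p xb) C + EMetric.infEdist xb (R p)) pb ≤
      lipuscMod (fun p => F p xb) pb + liplscMod R pb xb := by
  have calm {a b δ₁ δ₂ : ℝ} (ha : 0 < a) (hb : 0 < b)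
      (hF : LipUscWith (fun p => F p xb) pb a δ₁) (hR : LipLscWith R pb xb b δ₂) :
      CalmFromAboveWith (fun p => exc (F p xb) C + infEDist xb (R p)) pb (a + b) (min δ₁ δ₂) :=
    (hF.calmFromAboveWith_exc C).add hR.calmFromAboveWith_infEDist ha.le hb.le
  obtain ⟨a, ha, δ₁, hδ₁, hF⟩ := hFusc
  obtain ⟨b, hb, δ₂, hδ₂, hR⟩ := hRlsc
  refine ⟨⟨a + b, add_pos ha hb, min δ₁ δ₂, lt_min hδ₁ hδ₂, calm ha hb hF hR⟩, ?_⟩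
  have bdd {S : Set ℝ} (hS : ∀ ℓ ∈ S, 0 < ℓ) : BddBelow S := ⟨0, fun ℓ h => (hS ℓ h).le⟩
  have hA : {ℓ : ℝ | 0 < ℓ ∧ ∃ δ > (0 : ℝ), LipUscWith (fun p => F p xb) pb ℓ δ}.Nonempty :=
    ⟨a, ha, δ₁, hδ₁, hF⟩
  have hB : {ℓ : ℝ | 0 < ℓ ∧ ∃ δ > (0 : ℝ), LipLscWith R pb xb ℓ δ}.Nonempty :=
    ⟨b, hb, δ₂, hδ₂, hR⟩
  rw [lipuscMod, liplscMod, ← csInf_add hA (bdd fun _ h => h.1) hB (bdd fun _ h => h.1)]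
  refine csInf_le_csInf (bdd fun _ h => h.1) (hA.add hB) ?_
  rintro _ ⟨a', ⟨ha', δ₁', hδ₁', hF'⟩, b', ⟨hb', δ₂', hδ₂', hR'⟩, rfl⟩
  exact ⟨add_pos ha' hb', min δ₁' δ₂', lt_min hδ₁' hδ₂', calm ha' hb' hF' hR'⟩

/-- with `ν₁(p,x) = exc (F(p,x), C) + dist (x, R(p))`, if `ν₁(pb,xb) = 0`,
`F(·,xb)` is Lipschitz u.s.c. at `pb` and `R` is Lipschitz l.s.c. at `(pb,xb)`, then
`p ↦ ν₁(p,xb)` is calm from above at `pb`, with modulus at most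
`Lipusc F(·,xb)(pb) + Liplsc R(pb,xb)`. -/
theorem nu1_calm_from_above {P X Y : Type*} [MetricSpace P]
    [NormedAddCommGroup X] [NormedSpace ℝ X] [CompleteSpace X]
    [NormedAddCommGroup Y] [NormedSpace ℝ Y] [CompleteSpace Y]
    (C : Set Y) (hCclosed : IsClosed C) (hCconv : Convex ℝ C)
    (hCcone : ∀ c ∈ C, ∀ t : ℝ, 0 ≤ t → t • c ∈ C)
    (F : P → X → Set Y) (R : P → Set X)
    (hFne : ∀ p x, (F p x).Nonempty) (hRne : ∀ p, (R p).Nonempty)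
    (pb : P) (xb : X)
    (hsol : exc (F pb xb) C + EMetric.infEdist xb (R pb) = 0)
    (hFusc : LipUscAt (fun p => F p xb) pb)
    (hRlsc : LipLscAt R pb xb) :
    (∃ ℓ > (0 : ℝ), ∃ δ > (0 : ℝ),
      CalmFromAboveWith (fun p => exc (F p xb) C + EMetric.infEdist xb (R p)) pb ℓ δ) ∧
    calmFromAboveMod (fun p => exc (F p xb) C + EMetric.infEdist xb (R p)) pb ≤
      lipuscMod (fun p => F p xb) pb + liplscMod R pb xb :=
  nu1_calm_from_above_general C F R pb xb hFusc hRlsc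

end
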